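/- arXiv:2604.24087 — 6 statements merged into one kernel-verified Lean document; each statement's English description precedes it below -/
import Mathlib

section
/- Let n ≥ 3, α = 2 − 2/√3, and let w₁, …, w_n ∈ ℝ³ satisfy ∑ᵢ wᵢ = 0 and ∑ᵢ |wᵢ| = 2. Set P_{ij} = |wᵢ||wⱼ| − ⟨wᵢ, wⱼ⟩, R₂ = ∑ᵢ |wᵢ|², and M_{ij} = ⟨wᵢ, wⱼ⟩ − (|wᵢ| − 2α/n)(|wⱼ| − 2α/n) + 2α²/n². If M_{ij} > 0 for all i, j, then ∑_{i,j} P_{ij}² < (8α/n)(R₂ − α/n). -/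
/-- With `n ≥ 3`, `α = 2 - 2/√3`, `w₁, …, wₙ ∈ ℝ³`, `∑ wᵢ = 0`, `∑ ‖wᵢ‖ = 2`,
`P i j = ‖wᵢ‖‖wⱼ‖ - ⟨wᵢ, wⱼ⟩`, `R₂ = ∑ ‖wᵢ‖²`, and
`M i j = ⟨wᵢ, wⱼ⟩ - (‖wᵢ‖ - 2α/n)(‖wⱼ‖ - 2α/n) + 2α²/n²`:
if all entries of `M` are strictly positive, then `∑_{i,j} P i j ² < (8α/n)(R₂ - α/n)`. -/
theorem F_lt_of_M_entrywise_pos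
    (n : ℕ) (hn : 3 ≤ n) (w : Fin n → EuclideanSpace ℝ (Fin 3))
    (hsum : ∑ i, w i = 0) (hper : ∑ i, ‖w i‖ = 2)
    (hM : ∀ i j : Fin n,
      0 < (inner ℝ (w i) (w j) : ℝ)
        - (‖w i‖ - 2 * (2 - 2 / Real.sqrt 3) / n) * (‖w j‖ - 2 * (2 - 2 / Real.sqrt 3) / n)
        + 2 * (2 - 2 / Real.sqrt 3) ^ 2 / n ^ 2) :
    ∑ i, ∑ j, (‖w i‖ * ‖w j‖ - (inner ℝ (w i) (w j) : ℝ)) ^ 2 <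
      8 * (2 - 2 / Real.sqrt 3) / n *
        ((∑ i, ‖w i‖ ^ 2) - (2 - 2 / Real.sqrt 3) / n) := by
  have hN : (0:ℝ) < n := by positivity
  set a : ℝ := 2 - 2 / Real.sqrt 3 with ha
  let P : Fin n → Fin n → ℝ := fun i j => ‖w i‖ * ‖w j‖ - inner ℝ (w i) (w j)
  let B : Fin n → Fin n → ℝ := fun i j => 2*a/n * (‖w i‖ + ‖w j‖) - 2*a^2/(n:ℝ)^2
  have hPnn : ∀ i j, 0 ≤ P i j := fun i j => sub_nonneg.2 (real_inner_le_norm _ _)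
  have hPB : ∀ i j, P i j < B i j := by
    intro i j
    have h := hM i j
    show ‖w i‖ * ‖w j‖ - inner ℝ (w i) (w j) < 2*a/n * (‖w i‖ + ‖w j‖) - 2*a^2/(n:ℝ)^2
    have hne : (n:ℝ) ≠ 0 := ne_of_gt hN
    have key : (2*a/(n:ℝ) * (‖w i‖ + ‖w j‖) - 2*a^2/(n:ℝ)^2)
        - (‖w i‖ * ‖w j‖ - (inner ℝ (w i) (w j) : ℝ))
        = (inner ℝ (w i) (w j) : ℝ) - (‖w i‖ - 2*a/n) * (‖w j‖ - 2*a/n) + 2*a^2/(n:ℝ)^2 := by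
      field_simp
      ring
    linarith [h, key]
  have hq1 : ∀ i, ∑ j, (inner ℝ (w i) (w j) : ℝ) = 0 := by
    intro i; rw [← inner_sum, hsum, inner_zero_right]
  have hq2 : ∀ j, ∑ i, (inner ℝ (w i) (w j) : ℝ) = 0 := by
    intro j; rw [← sum_inner, hsum, inner_zero_left]
  have e0 : ∑ i, ∑ j, P i j = 4 := by
    have h1 : ∀ i : Fin n, ∑ j, P i j = 2 * ‖w i‖ := by
      intro i
      show ∑ j, (‖w i‖ * ‖w j‖ - inner ℝ (w i) (w j)) = 2 * ‖w i‖
      rw [Finset.sum_sub_distrib, ← Finset.mul_sum, hq1 i, hper]; ring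
    rw [Finset.sum_congr rfl (fun i _ => h1 i), ← Finset.mul_sum, hper]; norm_num
  have e1 : ∑ i, ∑ j, P i j * ‖w i‖ = 2 * ∑ i, ‖w i‖ ^ 2 := by
    have h1 : ∀ i : Fin n, ∑ j, P i j * ‖w i‖ = 2 * ‖w i‖ ^ 2 := by
      intro i
      show ∑ j, (‖w i‖ * ‖w j‖ - inner ℝ (w i) (w j)) * ‖w i‖ = 2 * ‖w i‖ ^ 2
      rw [← Finset.sum_mul, Finset.sum_sub_distrib, ← Finset.mul_sum, hq1 i, hper]; ring
    rw [Finset.sum_congr rfl (fun i _ => h1 i), ← Finset.mul_sum]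
  have e2 : ∑ i, ∑ j, P i j * ‖w j‖ = 2 * ∑ i, ‖w i‖ ^ 2 := by
    rw [Finset.sum_comm]
    have h1 : ∀ j : Fin n, ∑ i, P i j * ‖w j‖ = 2 * ‖w j‖ ^ 2 := by
      intro j
      show ∑ i, (‖w i‖ * ‖w j‖ - inner ℝ (w i) (w j)) * ‖w j‖ = 2 * ‖w j‖ ^ 2
      rw [← Finset.sum_mul, Finset.sum_sub_distrib, ← Finset.sum_mul, hq2 j, hper]; ring
    rw [Finset.sum_congr rfl (fun j _ => h1 j), ← Finset.mul_sum]
  have hex : ∃ p : Fin n × Fin n, 0 < P p.1 p.2 := by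
    by_contra h
    push_neg at h
    have hz : ∑ i, ∑ j, P i j = 0 :=
      Finset.sum_eq_zero fun i _ => Finset.sum_eq_zero fun j _ =>
        le_antisymm (h (i, j)) (hPnn i j)
    rw [e0] at hz; norm_num at hz
  have hlt : ∑ i, ∑ j, P i j ^ 2 < ∑ i, ∑ j, P i j * B i j := by
    rw [← Finset.sum_product' (f := fun i j => P i j ^ 2),
        ← Finset.sum_product' (f := fun i j => P i j * B i j)]
    obtain ⟨p0, hp0⟩ := hex
    apply Finset.sum_lt_sum
    · intro p _
      have h1 := hPnn p.1 p.2
      have h2 := hPB p.1 p.2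
      nlinarith
    · exact ⟨p0, Finset.mem_univ _, by nlinarith [hPB p0.1 p0.2]⟩
  have eB : ∑ i, ∑ j, P i j * B i j =
      8 * a / n * ((∑ i, ‖w i‖ ^ 2) - a / n) := by
    have h1 : ∀ i j : Fin n, P i j * B i j =
        2*a/n * (P i j * ‖w i‖) + 2*a/n * (P i j * ‖w j‖) - 2*a^2/(n:ℝ)^2 * P i j := by
      intro i j; show P i j * (2*a/n * (‖w i‖ + ‖w j‖) - 2*a^2/(n:ℝ)^2) = _; ring
    calc ∑ i, ∑ j, P i j * B i j
        = ∑ i, ∑ j, (2*a/n * (P i j * ‖w i‖) + 2*a/n * (P i j * ‖w j‖)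
            - 2*a^2/(n:ℝ)^2 * P i j) := by
          exact Finset.sum_congr rfl fun i _ => Finset.sum_congr rfl fun j _ => h1 i j
      _ = 2*a/n * (∑ i, ∑ j, P i j * ‖w i‖) + 2*a/n * (∑ i, ∑ j, P i j * ‖w j‖)
            - 2*a^2/(n:ℝ)^2 * (∑ i, ∑ j, P i j) := by
          simp only [Finset.sum_sub_distrib, Finset.sum_add_distrib, Finset.mul_sum]
      _ = 8 * a / n * ((∑ i, ‖w i‖ ^ 2) - a / n) := by
          rw [e0, e1, e2]
          field_simp
          ring
  calc ∑ i, ∑ j, (‖w i‖ * ‖w j‖ - (inner ℝ (w i) (w j) : ℝ)) ^ 2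
      = ∑ i, ∑ j, P i j ^ 2 := rfl
    _ < ∑ i, ∑ j, P i j * B i j := hlt
    _ = 8 * a / n * ((∑ i, ‖w i‖ ^ 2) - a / n) := eB
end

section
/- Let n ≥ 3, α = 2 − 2/√3, and let w₁, …, w_n ∈ ℝ³ satisfy ∑ᵢ wᵢ = 0 and ∑ᵢ |wᵢ| = 2. Set P_{ij} = |wᵢ||wⱼ| − ⟨wᵢ, wⱼ⟩ and R₂ = ∑ᵢ |wᵢ|². Then ∑_{i,j} P_{ij}² ≥ (8α/n)(R₂ − α/n). -/
open Finset

private lemma sum_comm4' {ι κ : Type*} [Fintype ι] [Fintype κ] (F : ι → ι → κ → κ → ℝ) :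
    ∑ i, ∑ j, ∑ a, ∑ b, F i j a b = ∑ a, ∑ b, ∑ i, ∑ j, F i j a b := by
  calc ∑ i, ∑ j, ∑ a, ∑ b, F i j a b
      = ∑ i, ∑ a, ∑ j, ∑ b, F i j a b :=
        Finset.sum_congr rfl fun i _ => Finset.sum_comm
    _ = ∑ a, ∑ i, ∑ j, ∑ b, F i j a b := Finset.sum_comm
    _ = ∑ a, ∑ i, ∑ b, ∑ j, F i j a b :=
        Finset.sum_congr rfl fun a _ => Finset.sum_congr rfl fun i _ => Finset.sum_comm
    _ = ∑ a, ∑ b, ∑ i, ∑ j, F i j a b :=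
        Finset.sum_congr rfl fun a _ => Finset.sum_comm

private lemma scalar_key' (a m t U q N : ℝ) (ha : a^2 = 4*a - 8/3) (ha2 : a ≤ 1)
    (hm : 0 < m) (hV0 : 4*m ≤ t)
    (hU : 0 ≤ U) (hUq : U^2 ≤ (t - 4*m)*q)
    (hNU : 2*q^2 + (t*U - q)^2 ≤ 2*N*U^2) (htN : t^2 ≤ 3*N) :
    8*a*m*(t - a*m) ≤ t^2 - 2*U + N := by
  have ham : a^2*m^2 = (4*a-8/3)*m^2 := by rw [ha]
  rcases eq_or_lt_of_le hU with hU0 | hUpos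
  · have h0 : U = 0 := hU0.symm
    subst h0
    have h1 : 0 ≤ t - 4*m := by linarith
    have h2 : 0 ≤ t - (6*a-4)*m := by nlinarith
    nlinarith [mul_nonneg h1 h2, htN, ham]
  · have hU2 : 0 < U^2 := by positivity
    have ham2 : a^2*(m^2*U^2) = (4*a-8/3)*(m^2*U^2) := by rw [ha]
    have key : 0 ≤ U^2 * ((t^2 - 2*U + N) - 8*a*m*(t - a*m)) := by
      nlinarith [sq_nonneg (3*q - (3*t - 8*m)*U),
        mul_nonneg hU (sub_nonneg.mpr hUq),
        mul_nonneg (mul_nonneg hm.le (by linarith : (0:ℝ) ≤ 1 - a))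
          (mul_nonneg (by linarith : (0:ℝ) ≤ t - 4*m) hU2.le),
        hNU, ham2]
    nlinarith [key, hU2]

private lemma alpha_eq' : (2 - 2/Real.sqrt 3)^2 = 4*(2 - 2/Real.sqrt 3) - 8/3 := by
  have hs3 : (0:ℝ) < Real.sqrt 3 := Real.sqrt_pos.mpr (by norm_num)
  have h3 : Real.sqrt 3 ^ 2 = 3 := Real.sq_sqrt (by norm_num)
  field_simp
  ring_nf
  nlinarith [h3, hs3]

private lemma alpha_le_one' : (2 - 2/Real.sqrt 3) ≤ 1 := by
  have hs3 : (0:ℝ) < Real.sqrt 3 := Real.sqrt_pos.mpr (by norm_num)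
  have h3 : Real.sqrt 3 ^ 2 = 3 := Real.sq_sqrt (by norm_num)
  have h1 : Real.sqrt 3 ≤ 2 := by nlinarith
  have h2 : (1:ℝ) ≤ 2/Real.sqrt 3 := by
    rw [le_div_iff₀ hs3]
    linarith
  linarith

/-- With `n ≥ 3`, `α = 2 - 2/√3`, `w₁, …, wₙ ∈ ℝ³`, `∑ wᵢ = 0`, `∑ ‖wᵢ‖ = 2`,
`P i j = ‖wᵢ‖‖wⱼ‖ - ⟨wᵢ, wⱼ⟩` and `R₂ = ∑ ‖wᵢ‖²`, we have
`∑_{i,j} P i j ² ≥ (8α/n)(R₂ - α/n)`. -/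
theorem F_ge_final_lower_bound
    (n : ℕ) (hn : 3 ≤ n) (w : Fin n → EuclideanSpace ℝ (Fin 3))
    (hsum : ∑ i, w i = 0) (hper : ∑ i, ‖w i‖ = 2) :
    8 * (2 - 2 / Real.sqrt 3) / n *
        ((∑ i, ‖w i‖ ^ 2) - (2 - 2 / Real.sqrt 3) / n) ≤
      ∑ i, ∑ j, (‖w i‖ * ‖w j‖ - (inner ℝ (w i) (w j) : ℝ)) ^ 2 := by
  have hn0 : (0:ℝ) < n := by
    have : (3:ℝ) ≤ n := by exact_mod_cast hn
    linarith
  have hn0' : (n:ℝ) ≠ 0 := ne_of_gt hn0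
  -- coordinates
  have hcoord : ∀ i j : Fin n, (inner ℝ (w i) (w j) : ℝ) = ∑ a, w i a * w j a := fun i j => by
    simp [PiLp.inner_apply, RCLike.inner_apply, conj_trivial, mul_comm]
  have hnorm : ∀ i, ‖w i‖^2 = ∑ a, (w i a)^2 := fun i => by
    rw [← real_inner_self_eq_norm_sq]
    simp only [PiLp.inner_apply, RCLike.inner_apply, conj_trivial, pow_two]
  have hzero : ∀ a, ∑ i, w i a = 0 := fun a => by
    have h := congrArg (EuclideanSpace.proj a) hsum
    simpa [map_sum] using h
  -- basic quantities
  set s : Fin n → ℝ := fun i => ‖w i‖ with hsdef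
  set t : ℝ := ∑ i, ‖w i‖^2 with htdef
  set u : Fin 3 → ℝ := fun a => ∑ i, s i * w i a with hudef
  set U : ℝ := ∑ a, (u a)^2 with hUdef
  set p : Fin n → ℝ := fun i => ∑ a, w i a * u a with hpdef
  set q : ℝ := ∑ i, (p i)^2 with hqdef
  set M : Fin 3 → Fin 3 → ℝ := fun a b => ∑ i, w i a * w i b with hMdef
  set N : ℝ := ∑ a, ∑ b, (M a b)^2 with hNdef
  have hts : t = ∑ i, (s i)^2 := rfl
  have hper' : ∑ i, s i = 2 := hper
  -- trace identity
  have hT : ∑ a, M a a = t := by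
    rw [hts]
    calc ∑ a, M a a = ∑ a, ∑ i, w i a * w i a := rfl
      _ = ∑ i, ∑ a, w i a * w i a := Finset.sum_comm
      _ = ∑ i, (s i)^2 := by
          refine Finset.sum_congr rfl fun i _ => ?_
          rw [hnorm i]
          exact Finset.sum_congr rfl fun a _ => (pow_two _).symm
  -- ∑ s_i p_i = U
  have hsp : ∑ i, s i * p i = U := by
    calc ∑ i, s i * p i = ∑ i, ∑ a, (s i * w i a) * u a := by
          refine Finset.sum_congr rfl fun i _ => ?_
          rw [hpdef, Finset.mul_sum]
          exact Finset.sum_congr rfl fun a _ => by ring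
      _ = ∑ a, ∑ i, (s i * w i a) * u a := Finset.sum_comm
      _ = ∑ a, (u a) * u a := by
          refine Finset.sum_congr rfl fun a _ => ?_
          rw [← Finset.sum_mul]
      _ = U := by
          rw [hUdef]
          exact Finset.sum_congr rfl fun a _ => (pow_two _).symm
  -- ∑ p_i = 0
  have hp0 : ∑ i, p i = 0 := by
    calc ∑ i, p i = ∑ a, ∑ i, w i a * u a := Finset.sum_comm
      _ = ∑ a, (∑ i, w i a) * u a := by
          refine Finset.sum_congr rfl fun a _ => ?_
          rw [Finset.sum_mul]
      _ = 0 := by simp [hzero]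
  -- Q : u^T M u = q
  have hQ : ∑ a, ∑ b, (u a * u b) * M a b = q := by
    calc ∑ a, ∑ b, (u a * u b) * M a b
        = ∑ a, ∑ b, ∑ i, (u a * w i a) * (u b * w i b) := by
          refine Finset.sum_congr rfl fun a _ => Finset.sum_congr rfl fun b _ => ?_
          rw [hMdef, Finset.mul_sum]
          exact Finset.sum_congr rfl fun i _ => by ring
      _ = ∑ a, ∑ i, ∑ b, (u a * w i a) * (u b * w i b) :=
          Finset.sum_congr rfl fun a _ => Finset.sum_comm
      _ = ∑ a, ∑ i, (u a * w i a) * p i := by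
          refine Finset.sum_congr rfl fun a _ => Finset.sum_congr rfl fun i _ => ?_
          rw [← Finset.mul_sum, hpdef]
          congr 1
          exact Finset.sum_congr rfl fun b _ => by ring
      _ = ∑ i, ∑ a, (u a * w i a) * p i := Finset.sum_comm
      _ = ∑ i, p i * p i := by
          refine Finset.sum_congr rfl fun i _ => ?_
          rw [← Finset.sum_mul]
          congr 1
          rw [hpdef]
          exact Finset.sum_congr rfl fun a _ => by ring
      _ = q := by
          rw [hqdef]
          exact Finset.sum_congr rfl fun i _ => (pow_two _).symm
  -- main expansion identity
  have hA : ∑ i, ∑ j, (s i)^2 * (s j)^2 = t^2 := by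
    rw [hts, pow_two, Finset.sum_mul_sum]
  have hB : ∑ i, ∑ j, s i * s j * (∑ a, w i a * w j a) = U := by
    calc ∑ i, ∑ j, s i * s j * (∑ a, w i a * w j a)
        = ∑ i, ∑ j, ∑ a, (s i * w i a) * (s j * w j a) := by
          refine Finset.sum_congr rfl fun i _ => Finset.sum_congr rfl fun j _ => ?_
          rw [Finset.mul_sum]
          exact Finset.sum_congr rfl fun a _ => by ring
      _ = ∑ i, ∑ a, ∑ j, (s i * w i a) * (s j * w j a) :=
          Finset.sum_congr rfl fun i _ => Finset.sum_comm
      _ = ∑ i, ∑ a, (s i * w i a) * u a := by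
          refine Finset.sum_congr rfl fun i _ => Finset.sum_congr rfl fun a _ => ?_
          rw [← Finset.mul_sum, hudef]
      _ = ∑ a, ∑ i, (s i * w i a) * u a := Finset.sum_comm
      _ = ∑ a, u a * u a := by
          refine Finset.sum_congr rfl fun a _ => ?_
          rw [← Finset.sum_mul]
      _ = U := by
          rw [hUdef]
          exact Finset.sum_congr rfl fun a _ => (pow_two _).symm
  have hC : ∑ i, ∑ j, (∑ a, w i a * w j a)^2 = N := by
    calc ∑ i, ∑ j, (∑ a, w i a * w j a)^2
        = ∑ i, ∑ j, ∑ a, ∑ b, (w i a * w i b) * (w j a * w j b) := by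
          refine Finset.sum_congr rfl fun i _ => Finset.sum_congr rfl fun j _ => ?_
          rw [sq, Finset.sum_mul_sum]
          exact Finset.sum_congr rfl fun a _ => Finset.sum_congr rfl fun b _ => by ring
      _ = ∑ a, ∑ b, ∑ i, ∑ j, (w i a * w i b) * (w j a * w j b) := sum_comm4' _
      _ = ∑ a, ∑ b, (M a b)^2 := by
          refine Finset.sum_congr rfl fun a _ => Finset.sum_congr rfl fun b _ => ?_
          rw [sq, Finset.sum_mul_sum]
      _ = N := rfl
  have hI : ∑ i, ∑ j, (‖w i‖ * ‖w j‖ - (inner ℝ (w i) (w j) : ℝ))^2 = t^2 - 2*U + N := by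
    have expand : ∀ i j : Fin n, (‖w i‖ * ‖w j‖ - (inner ℝ (w i) (w j) : ℝ))^2
        = (s i)^2*(s j)^2 - 2*(s i * s j * (∑ a, w i a * w j a)) + (∑ a, w i a * w j a)^2 := by
      intro i j
      rw [hcoord i j]
      show (s i * s j - _)^2 = _
      ring
    have split : ∀ (f g h : Fin n → ℝ),
        ∑ i, (f i - 2*g i + h i) = (∑ i, f i) - 2*(∑ i, g i) + (∑ i, h i) := by
      intro f g h
      rw [Finset.sum_add_distrib, Finset.sum_sub_distrib, ← Finset.mul_sum]
    calc ∑ i, ∑ j, (‖w i‖ * ‖w j‖ - (inner ℝ (w i) (w j) : ℝ))^2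
        = ∑ i, ∑ j, ((s i)^2*(s j)^2 - 2*(s i * s j * (∑ a, w i a * w j a))
            + (∑ a, w i a * w j a)^2) := by
          exact Finset.sum_congr rfl fun i _ => Finset.sum_congr rfl fun j _ => expand i j
      _ = ∑ i, ((∑ j, (s i)^2*(s j)^2) - 2*(∑ j, s i * s j * (∑ a, w i a * w j a))
            + (∑ j, (∑ a, w i a * w j a)^2)) :=
          Finset.sum_congr rfl fun i _ => split _ _ _
      _ = (∑ i, ∑ j, (s i)^2*(s j)^2) - 2*(∑ i, ∑ j, s i * s j * (∑ a, w i a * w j a))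
            + (∑ i, ∑ j, (∑ a, w i a * w j a)^2) := split _ _ _
      _ = t^2 - 2*U + N := by rw [hA, hB, hC]
  -- variance identity
  have hVt : ∑ i, (s i - 2/(n:ℝ))^2 = t - 4/(n:ℝ) := by
    have e : ∀ i : Fin n, (s i - 2/(n:ℝ))^2 = s i^2 - (4/(n:ℝ))*s i + 4/(n:ℝ)^2 :=
      fun i => by ring
    calc ∑ i, (s i - 2/(n:ℝ))^2
        = ∑ i, (s i^2 - (4/(n:ℝ))*s i + 4/(n:ℝ)^2) := Finset.sum_congr rfl fun i _ => e i
      _ = (∑ i, s i^2) - (4/(n:ℝ))*(∑ i, s i) + (n:ℝ)*(4/(n:ℝ)^2) := by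
          rw [Finset.sum_add_distrib, Finset.sum_sub_distrib, ← Finset.mul_sum,
            Finset.sum_const, Finset.card_univ, Fintype.card_fin, nsmul_eq_mul]
      _ = t - 4/(n:ℝ) := by
          rw [hper', ← hts]
          field_simp
          ring
  have hV0 : 4*(1/(n:ℝ)) ≤ t := by
    have h2 : 0 ≤ ∑ i, (s i - 2/(n:ℝ))^2 := Finset.sum_nonneg fun i _ => sq_nonneg _
    rw [hVt] at h2
    rw [mul_one_div]
    linarith
  have hUnn : 0 ≤ U := by
    rw [hUdef]; exact Finset.sum_nonneg fun a _ => sq_nonneg _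
  -- U^2 ≤ (t - 4/n) q
  have hp2 : U = ∑ i, (s i - 2/(n:ℝ)) * p i := by
    have e : ∑ i, (s i - 2/(n:ℝ)) * p i = (∑ i, s i * p i) - (2/(n:ℝ))*(∑ i, p i) := by
      rw [Finset.mul_sum, ← Finset.sum_sub_distrib]
      exact Finset.sum_congr rfl fun i _ => by ring
    rw [e, hsp, hp0]
    ring
  have hUq : U^2 ≤ (t - 4*(1/(n:ℝ)))*q := by
    calc U^2 = (∑ i, (s i - 2/(n:ℝ)) * p i)^2 := by rw [← hp2]
      _ ≤ (∑ i, (s i - 2/(n:ℝ))^2)*(∑ i, (p i)^2) :=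
          Finset.sum_mul_sq_le_sq_mul_sq _ _ _
      _ = (t - 4*(1/(n:ℝ)))*q := by
          rw [hVt, ← hqdef]
          ring_nf
  -- prepare Fin-3 expansions before making definitions opaque
  have hU3 : u 0^2 + u 1^2 + u 2^2 = U := by rw [hUdef, Fin.sum_univ_three]
  have hT3 : M 0 0 + M 1 1 + M 2 2 = t := by rw [← hT, Fin.sum_univ_three]
  have hQ3 := hQ
  simp only [Fin.sum_univ_three] at hQ3
  have hdiag : (M 0 0)^2 + (M 1 1)^2 + (M 2 2)^2 ≤ N := by
    have h : ∑ a, (M a a)^2 ≤ N := by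
      rw [hNdef]
      refine Finset.sum_le_sum fun a _ => ?_
      exact Finset.single_le_sum (f := fun b => (M a b)^2) (fun b _ => sq_nonneg _)
        (Finset.mem_univ a)
    rwa [Fin.sum_univ_three] at h
  have hqnn : 0 ≤ q := by
    rw [hqdef]; exact Finset.sum_nonneg fun i _ => sq_nonneg _
  have hNnn : 0 ≤ N := by
    rw [hNdef]
    exact Finset.sum_nonneg fun a _ => Finset.sum_nonneg fun b _ => sq_nonneg _
  have hN9 : ∑ a, ∑ b, (M a b)^2 = N := hNdef.symm
  -- make everything opaque
  clear_value s t u U p q M N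
  clear hsdef htdef hudef hpdef hqdef hMdef hNdef hts hper' hT hsp hp0 hQ hA hB hC
    hzero hnorm hcoord hVt hp2
  have htN : t^2 ≤ 3*N := by
    rw [← hT3]
    nlinarith [hdiag, sq_nonneg (M 0 0 - M 1 1), sq_nonneg (M 0 0 - M 2 2),
      sq_nonneg (M 1 1 - M 2 2)]
  -- Cauchy-Schwarz for the matrix bound
  have hNU : 2*q^2 + (t*U - q)^2 ≤ 2*N*U^2 := by
    set B : Fin 3 → Fin 3 → ℝ := fun a b =>
      (3*q - t*U)*(u a * u b) + (if a = b then (t*U - q)*U else 0) with hBdef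
    have hBM : ∑ a, ∑ b, B a b * M a b = 2*q^2 + (t*U - q)^2 := by
      simp only [hBdef, Fin.sum_univ_three]
      norm_num [show (0:Fin 3) ≠ 1 from by decide, show (0:Fin 3) ≠ 2 from by decide,
        show (1:Fin 3) ≠ 0 from by decide, show (1:Fin 3) ≠ 2 from by decide,
        show (2:Fin 3) ≠ 0 from by decide, show (2:Fin 3) ≠ 1 from by decide]
      linear_combination (3*q - t*U)*hQ3 + (t*U - q)*U*hT3
    have hBB : ∑ a, ∑ b, (B a b)^2 = U^2*(4*q^2 + 2*(t*U - q)^2) := by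
      simp only [hBdef, Fin.sum_univ_three]
      norm_num [show (0:Fin 3) ≠ 1 from by decide, show (0:Fin 3) ≠ 2 from by decide,
        show (1:Fin 3) ≠ 0 from by decide, show (1:Fin 3) ≠ 2 from by decide,
        show (2:Fin 3) ≠ 0 from by decide, show (2:Fin 3) ≠ 1 from by decide]
      linear_combination ((3*q - t*U)^2*(u 0^2 + u 1^2 + u 2^2 + U)
        + 2*(3*q - t*U)*((t*U - q)*U))*hU3
    have csB := Finset.sum_mul_sq_le_sq_mul_sq (Finset.univ : Finset (Fin 3 × Fin 3))
      (fun ab => B ab.1 ab.2) (fun ab => M ab.1 ab.2)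
    simp only [Fintype.sum_prod_type] at csB
    rw [hBM, hBB, hN9] at csB
    clear_value B
    clear hBdef hBM hBB B
    have hX : 0 ≤ 2*q^2 + (t*U - q)^2 := by positivity
    have hNN : 0 ≤ 2*N*U^2 := by positivity
    rcases eq_or_lt_of_le hX with h0 | hpos
    · linarith
    · have h2 : (2*q^2 + (t*U - q)^2)*(2*q^2 + (t*U - q)^2)
          ≤ (2*N*U^2)*(2*q^2 + (t*U - q)^2) := by
        calc (2*q^2 + (t*U - q)^2)*(2*q^2 + (t*U - q)^2)
            = (2*q^2 + (t*U - q)^2)^2 := by ring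
          _ ≤ U^2*(4*q^2 + 2*(t*U - q)^2)*N := csB
          _ = (2*N*U^2)*(2*q^2 + (t*U - q)^2) := by ring
      exact le_of_mul_le_mul_right h2 hpos
  -- alpha facts and conclusion
  set a : ℝ := 2 - 2/Real.sqrt 3 with hadef
  have ha : a^2 = 4*a - 8/3 := alpha_eq'
  have ha2 : a ≤ 1 := alpha_le_one'
  have hm : (0:ℝ) < 1/(n:ℝ) := by positivity
  have key := scalar_key' a (1/(n:ℝ)) t U q N ha ha2 hm hV0 hUnn hUq hNU htN
  rw [hI]
  calc 8*a/(n:ℝ) * (t - a/(n:ℝ)) = 8*a*(1/(n:ℝ))*(t - a*(1/(n:ℝ))) := by ring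
    _ ≤ t^2 - 2*U + N := key
end

section
/- Let u, v ∈ ℂ² and let w = p(u), w' = p(v) be their Hopf images, where p(a, b) = (āb + a b̄, i(āb − a b̄), |a|² − |b|²) ∈ ℝ³. Then |⟨u, v⟩|² = ½|w||w'| + ½⟨w, w'⟩, where ⟨u, v⟩ is the standard Hermitian inner product on ℂ² and ⟨w, w'⟩, |·| are the Euclidean inner product and norm on ℝ³. -/
/-- The Hopf map `p : ℂ² → ℝ³`,
`p(a, b) = (āb + ab̄, i(āb − ab̄), |a|² − |b|²)`. -/
noncomputable def hopf (u : EuclideanSpace ℂ (Fin 2)) : EuclideanSpace ℝ (Fin 3) :=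
  (WithLp.equiv 2 (Fin 3 → ℝ)).symm
    ![((starRingEnd ℂ) (u 0) * u 1 + u 0 * (starRingEnd ℂ) (u 1)).re,
      (Complex.I * ((starRingEnd ℂ) (u 0) * u 1 - u 0 * (starRingEnd ℂ) (u 1))).re,
      ‖u 0‖ ^ 2 - ‖u 1‖ ^ 2]

lemma cnorm_sq (z : ℂ) : ‖z‖ ^ 2 = z.re ^ 2 + z.im ^ 2 := by
  rw [Complex.sq_norm, Complex.normSq_apply]; ring

lemma hopf_norm (u : EuclideanSpace ℂ (Fin 2)) : ‖hopf u‖ = ‖u 0‖ ^ 2 + ‖u 1‖ ^ 2 := by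
  have h : ‖hopf u‖ = Real.sqrt (∑ i, ‖hopf u i‖ ^ 2) := EuclideanSpace.norm_eq _
  rw [h, Fin.sum_univ_three]
  have e0 : hopf u 0 = ((starRingEnd ℂ) (u 0) * u 1 + u 0 * (starRingEnd ℂ) (u 1)).re := rfl
  have e1 : hopf u 1 = (Complex.I * ((starRingEnd ℂ) (u 0) * u 1 - u 0 * (starRingEnd ℂ) (u 1))).re := rfl
  have e2 : hopf u 2 = ‖u 0‖ ^ 2 - ‖u 1‖ ^ 2 := rfl
  rw [e0, e1, e2]
  have : ‖((starRingEnd ℂ) (u 0) * u 1 + u 0 * (starRingEnd ℂ) (u 1)).re‖ ^ 2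
      + ‖(Complex.I * ((starRingEnd ℂ) (u 0) * u 1 - u 0 * (starRingEnd ℂ) (u 1))).re‖ ^ 2
      + ‖‖u 0‖ ^ 2 - ‖u 1‖ ^ 2‖ ^ 2 = (‖u 0‖ ^ 2 + ‖u 1‖ ^ 2) ^ 2 := by
    simp only [Real.norm_eq_abs, sq_abs, cnorm_sq]
    simp only [Complex.add_re, Complex.add_im, Complex.sub_re, Complex.sub_im,
      Complex.mul_re, Complex.mul_im, Complex.conj_re, Complex.conj_im,
      Complex.I_re, Complex.I_im]
    ring
  rw [this, Real.sqrt_sq (by positivity)]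

/-- For `u, v ∈ ℂ²` with Hopf images `w = p(u)`, `w' = p(v)`:
`|⟨u, v⟩|² = ½ ‖w‖ ‖w'‖ + ½ ⟨w, w'⟩`. -/
theorem abs_inner_sq_eq_hopf
    (u v : EuclideanSpace ℂ (Fin 2)) :
    ‖(inner ℂ u v : ℂ)‖ ^ 2 =
      (1 / 2) * ‖hopf u‖ * ‖hopf v‖ + (1 / 2) * (inner ℝ (hopf u) (hopf v) : ℝ) := by
  rw [hopf_norm, hopf_norm]
  have hin : (inner ℂ u v : ℂ) = (starRingEnd ℂ) (u 0) * v 0 + (starRingEnd ℂ) (u 1) * v 1 := by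
    simp [PiLp.inner_apply, Fin.sum_univ_two, RCLike.inner_apply, mul_comm]
  have hin2 : (inner ℝ (hopf u) (hopf v) : ℝ) = ∑ i, hopf u i * hopf v i := by
    simp [PiLp.inner_apply, RCLike.inner_apply, mul_comm]
  rw [hin, hin2, Fin.sum_univ_three]
  have e0u : hopf u 0 = ((starRingEnd ℂ) (u 0) * u 1 + u 0 * (starRingEnd ℂ) (u 1)).re := rfl
  have e1u : hopf u 1 = (Complex.I * ((starRingEnd ℂ) (u 0) * u 1 - u 0 * (starRingEnd ℂ) (u 1))).re := rfl
  have e2u : hopf u 2 = ‖u 0‖ ^ 2 - ‖u 1‖ ^ 2 := rfl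
  have e0v : hopf v 0 = ((starRingEnd ℂ) (v 0) * v 1 + v 0 * (starRingEnd ℂ) (v 1)).re := rfl
  have e1v : hopf v 1 = (Complex.I * ((starRingEnd ℂ) (v 0) * v 1 - v 0 * (starRingEnd ℂ) (v 1))).re := rfl
  have e2v : hopf v 2 = ‖v 0‖ ^ 2 - ‖v 1‖ ^ 2 := rfl
  rw [e0u, e1u, e2u, e0v, e1v, e2v]
  simp only [cnorm_sq]
  simp only [Complex.add_re, Complex.add_im, Complex.sub_re, Complex.sub_im,
    Complex.mul_re, Complex.mul_im, Complex.conj_re, Complex.conj_im,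
    Complex.I_re, Complex.I_im]
  ring
end

section
/- Let n ≥ 3, α = 2 − 2/√3, and let w₁, …, w_n ∈ ℝ³ satisfy ∑ᵢ wᵢ = 0 and ∑ᵢ |wᵢ| = 2. Define M_{ij} = ⟨wᵢ, wⱼ⟩ − (|wᵢ| − 2α/n)(|wⱼ| − 2α/n) + 2α²/n². If M_{ij} ≥ 0 for all i, j, then |wᵢ| = 2/n for every i. -/
open Finset

private lemma aux_comm4 {n : ℕ} (f : Fin n → Fin n → Fin 3 → Fin 3 → ℝ) :
    ∑ i, ∑ j, ∑ k, ∑ l, f i j k l = ∑ k, ∑ l, ∑ i, ∑ j, f i j k l := by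
  have A : ∑ i, ∑ j, ∑ k, ∑ l, f i j k l = ∑ i, ∑ k, ∑ j, ∑ l, f i j k l :=
    Finset.sum_congr rfl fun i _ => Finset.sum_comm
  have B : ∑ i, ∑ k, ∑ j, ∑ l, f i j k l = ∑ i, ∑ k, ∑ l, ∑ j, f i j k l :=
    Finset.sum_congr rfl fun i _ => Finset.sum_congr rfl fun k _ => Finset.sum_comm
  have C : ∑ i, ∑ k, ∑ l, ∑ j, f i j k l = ∑ k, ∑ i, ∑ l, ∑ j, f i j k l :=
    Finset.sum_comm
  have D : ∑ k, ∑ i, ∑ l, ∑ j, f i j k l = ∑ k, ∑ l, ∑ i, ∑ j, f i j k l :=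
    Finset.sum_congr rfl fun k _ => Finset.sum_comm
  rw [A, B, C, D]

private lemma aux_swap {n : ℕ} (q : Fin n → Fin 3 → ℝ) :
    ∑ i, ∑ j, (∑ k, q i k * q j k)^2 = ∑ k, ∑ l, (∑ i, q i k * q i l)^2 := by
  have h1 : ∀ i j : Fin n, (∑ k, q i k * q j k)^2
      = ∑ k, ∑ l, (q i k * q i l) * (q j k * q j l) := by
    intro i j
    rw [sq, Finset.sum_mul_sum]
    exact Finset.sum_congr rfl fun k _ => Finset.sum_congr rfl fun l _ => by ring
  have h2 : ∀ k l : Fin 3, (∑ i, q i k * q i l)^2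
      = ∑ i, ∑ j, (q i k * q i l) * (q j k * q j l) := by
    intro k l
    rw [sq, Finset.sum_mul_sum]
  simp_rw [h1, h2]
  exact aux_comm4 _

/-- The key dimension-three inequality: for vectors `w i` in `ℝ³` and a unit vector `v`,
the full square-sum of the Gram matrix dominates `ℓ² + (β - ℓ)²/2`, where
`ℓ = ∑ ⟨w i, v⟩²` and `β = ∑ ‖w i‖²`. -/
private lemma aux_dim3 {n : ℕ} (w : Fin n → EuclideanSpace ℝ (Fin 3))
    (v : EuclideanSpace ℝ (Fin 3)) (hv : ‖v‖ = 1) :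
    (∑ i, (inner ℝ (w i) v : ℝ)^2)^2
      + (∑ i, ‖w i‖^2 - ∑ i, (inner ℝ (w i) v : ℝ)^2)^2 / 2
    ≤ ∑ i, ∑ j, (inner ℝ (w i) (w j) : ℝ)^2 := by
  -- get an orthonormal basis starting with v
  have hcard : Module.finrank ℝ (EuclideanSpace ℝ (Fin 3)) = Fintype.card (Fin 3) := by
    simp [finrank_euclideanSpace_fin]
  have hortho : Orthonormal ℝ (({0} : Set (Fin 3)).restrict (fun _ : Fin 3 => v)) := by
    constructor
    · rintro ⟨i, hi⟩
      exact hv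
    · rintro ⟨i, hi⟩ ⟨j, hj⟩ hij
      exfalso
      apply hij
      apply Subtype.ext
      simp only [Set.mem_singleton_iff] at hi hj
      simp [hi, hj]
  obtain ⟨b, hb⟩ := hortho.exists_orthonormalBasis_extension_of_card_eq hcard
  have hb0 : b 0 = v := hb 0 rfl
  set q : Fin n → Fin 3 → ℝ := fun i k => (inner ℝ (w i) (b k) : ℝ) with hq
  have hrep : ∀ i j, (inner ℝ (w i) (w j) : ℝ) = ∑ k, q i k * q j k := by
    intro i j
    rw [← b.sum_inner_mul_inner (w i) (w j)]
    exact Finset.sum_congr rfl fun k _ => by rw [real_inner_comm (w j) (b k)]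
  have hP1 : ∑ i, ∑ j, (inner ℝ (w i) (w j) : ℝ)^2 = ∑ k, ∑ l, (∑ i, q i k * q i l)^2 := by
    simp_rw [hrep]
    exact aux_swap q
  have hβ : ∑ i, ‖w i‖^2 = ∑ k : Fin 3, (∑ i, q i k * q i k) := by
    rw [Finset.sum_comm]
    apply Finset.sum_congr rfl
    intro i _
    rw [← real_inner_self_eq_norm_sq, hrep i i]
  have hℓ : ∑ i, (inner ℝ (w i) v : ℝ)^2 = ∑ i, q i 0 * q i 0 := by
    apply Finset.sum_congr rfl
    intro i _
    rw [sq, hq]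
    simp [hb0]
  rw [hP1, hβ, hℓ]
  rw [Fin.sum_univ_three fun k => ∑ l, (∑ i, q i k * q i l)^2]
  rw [Fin.sum_univ_three fun l => (∑ i, q i 0 * q i l)^2]
  rw [Fin.sum_univ_three fun l => (∑ i, q i 1 * q i l)^2]
  rw [Fin.sum_univ_three fun l => (∑ i, q i 2 * q i l)^2]
  rw [Fin.sum_univ_three fun k => ∑ i, q i k * q i k]
  nlinarith [sq_nonneg ((∑ i, q i 1 * q i 1) - ∑ i, q i 2 * q i 2),
    sq_nonneg (∑ i, q i 0 * q i 1), sq_nonneg (∑ i, q i 0 * q i 2),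
    sq_nonneg (∑ i, q i 1 * q i 0), sq_nonneg (∑ i, q i 2 * q i 0),
    sq_nonneg (∑ i, q i 1 * q i 2), sq_nonneg (∑ i, q i 2 * q i 1)]

set_option maxHeartbeats 2000000 in
/-- With `n ≥ 3`, `α = 2 - 2/√3`, `w₁, …, wₙ ∈ ℝ³`, `∑ wᵢ = 0`,
`∑ ‖wᵢ‖ = 2` and `M i j = ⟨wᵢ, wⱼ⟩ - (‖wᵢ‖ - 2α/n)(‖wⱼ‖ - 2α/n) + 2α²/n²`:
if `M` is entrywise nonnegative, then `‖wᵢ‖ = 2/n` for every `i`. -/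
theorem norms_eq_of_M_entrywise_nonneg
    (n : ℕ) (hn : 3 ≤ n) (w : Fin n → EuclideanSpace ℝ (Fin 3))
    (hsum : ∑ i, w i = 0) (hper : ∑ i, ‖w i‖ = 2)
    (hM : ∀ i j : Fin n,
      0 ≤ (inner ℝ (w i) (w j) : ℝ)
        - (‖w i‖ - 2 * (2 - 2 / Real.sqrt 3) / n) * (‖w j‖ - 2 * (2 - 2 / Real.sqrt 3) / n)
        + 2 * (2 - 2 / Real.sqrt 3) ^ 2 / n ^ 2) :
    ∀ i, ‖w i‖ = 2 / n := by
  classical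
  -- square root facts
  have h30 : (0:ℝ) ≤ 3 := by norm_num
  set r : ℝ := Real.sqrt 3 with hrdef
  have h3 : r ^ 2 = 3 := Real.sq_sqrt h30
  have hrpos : 0 < r := Real.sqrt_pos.mpr (by norm_num)
  have hr2 : r < 2 := by nlinarith
  set α : ℝ := 2 - 2 / r with hαdef
  have hα2 : α ^ 2 = 4 * α - 8/3 := by
    rw [hαdef]
    field_simp
    nlinarith [h3]
  have hα1 : α < 1 := by
    rw [hαdef]
    have h1 : 1 < 2 / r := (one_lt_div hrpos).mpr hr2
    linarith
  set N : ℝ := (n:ℝ) with hNdef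
  have hN0 : 0 < N := by
    rw [hNdef]
    exact_mod_cast Nat.lt_of_lt_of_le (by norm_num) hn
  set a : ℝ := 2 * α / N with hadef
  set c : ℝ := 2 * α ^ 2 / N ^ 2 with hcdef
  -- abbreviations
  set W : EuclideanSpace ℝ (Fin 3) := ∑ i, ‖w i‖ • w i with hWdef
  set X : ℝ := (inner ℝ W W : ℝ) with hXdef
  set β : ℝ := ∑ i, ‖w i‖^2 with hβdef
  set d : ℝ := ∑ i, (‖w i‖ - 2/N)^2 with hddef
  set P1 : ℝ := ∑ i, ∑ j, (inner ℝ (w i) (w j) : ℝ)^2 with hP1def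
  have hd0 : 0 ≤ d := Finset.sum_nonneg fun i _ => sq_nonneg _
  -- row sums of the Gram matrix vanish
  have hGrow : ∀ i, ∑ j, (inner ℝ (w i) (w j) : ℝ) = 0 := by
    intro i
    rw [← inner_sum, hsum, inner_zero_right]
  have hinnersum : ∀ x : EuclideanSpace ℝ (Fin 3), ∑ i, (inner ℝ (w i) x : ℝ) = 0 := by
    intro x
    rw [← sum_inner, hsum, inner_zero_left]
  -- inner products with W
  have hWi : ∀ i, (inner ℝ (w i) W : ℝ) = ∑ j, ‖w j‖ * (inner ℝ (w i) (w j) : ℝ) := by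
    intro i
    rw [hWdef, inner_sum]
    exact Finset.sum_congr rfl fun j _ => real_inner_smul_right _ _ _
  have hX1 : X = ∑ i, ‖w i‖ * (inner ℝ (w i) W : ℝ) := by
    rw [hXdef]
    conv_lhs => rw [hWdef, sum_inner]
    exact Finset.sum_congr rfl fun i _ => real_inner_smul_left _ _ _
  have hXG : X = ∑ i, ∑ j, (inner ℝ (w i) (w j) : ℝ) * (‖w i‖ * ‖w j‖) := by
    rw [hX1]
    apply Finset.sum_congr rfl
    intro i _
    rw [hWi i, Finset.mul_sum]
    exact Finset.sum_congr rfl fun j _ => by ring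
  have hW' : (∑ i, (‖w i‖ - a) • w i) = W := by
    rw [hWdef]
    simp_rw [sub_smul]
    rw [Finset.sum_sub_distrib, ← Finset.smul_sum, hsum, smul_zero, sub_zero]
  have hXt : X = ∑ i, ∑ j, ((‖w i‖ - a) * (‖w j‖ - a)) * (inner ℝ (w i) (w j) : ℝ) := by
    have e1 : X = (inner ℝ (∑ i, (‖w i‖ - a) • w i) (∑ j, (‖w j‖ - a) • w j) : ℝ) := by
      rw [hW', hXdef]
    rw [e1, sum_inner]
    apply Finset.sum_congr rfl
    intro i _
    rw [real_inner_smul_left, inner_sum, Finset.mul_sum]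
    exact Finset.sum_congr rfl fun j _ => by rw [real_inner_smul_right]; ring
  have hX0 : 0 ≤ X := real_inner_self_nonneg
  -- perimeter-related identities
  have hβd : β = d + 4/N := by
    have e1 : ∀ i : Fin n, (‖w i‖ - 2/N)^2 = ‖w i‖^2 - (4/N) * ‖w i‖ + 4/N^2 := by
      intro i; field_simp; ring
    have e2 : d = β - (4/N) * 2 + N * (4/N^2) := by
      rw [hddef, hβdef]
      rw [Finset.sum_congr rfl fun i _ => e1 i]
      rw [Finset.sum_add_distrib, Finset.sum_sub_distrib, ← Finset.mul_sum, hper,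
        Finset.sum_const, Finset.card_univ, Fintype.card_fin, nsmul_eq_mul, hNdef]
    rw [e2]
    field_simp
    ring
  -- Step 1 : the main inequality  P1 + (β - 2a)² ≤ 2X + 4c
  have hI : P1 + (β - 2*a)^2 ≤ 2*X + 4*c := by
    have hnn : 0 ≤ ∑ i, ∑ j, ((inner ℝ (w i) (w j) : ℝ)
        - (‖w i‖ - a) * (‖w j‖ - a) + c) * (‖w i‖ * ‖w j‖ - (inner ℝ (w i) (w j) : ℝ)) := by
      apply Finset.sum_nonneg; intro i _
      apply Finset.sum_nonneg; intro j _
      have h1 := hM i j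
      have h2 : (inner ℝ (w i) (w j) : ℝ) ≤ ‖w i‖ * ‖w j‖ := real_inner_le_norm _ _
      exact mul_nonneg h1 (by linarith)
    have hexp : ∀ i j : Fin n, ((inner ℝ (w i) (w j) : ℝ)
        - (‖w i‖ - a) * (‖w j‖ - a) + c) * (‖w i‖ * ‖w j‖ - (inner ℝ (w i) (w j) : ℝ))
        = (inner ℝ (w i) (w j) : ℝ) * (‖w i‖ * ‖w j‖)
          - ((‖w i‖ - a) * ‖w i‖) * ((‖w j‖ - a) * ‖w j‖)
          + c * (‖w i‖ * ‖w j‖)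
          - (inner ℝ (w i) (w j) : ℝ)^2
          + ((‖w i‖ - a) * (‖w j‖ - a)) * (inner ℝ (w i) (w j) : ℝ)
          - c * (inner ℝ (w i) (w j) : ℝ) := by
      intro i j; ring
    have T2 : ∑ i, ∑ j, ((‖w i‖ - a) * ‖w i‖) * ((‖w j‖ - a) * ‖w j‖) = (β - 2*a)^2 := by
      rw [← Finset.sum_mul_sum]
      have e : ∑ i, (‖w i‖ - a) * ‖w i‖ = β - 2*a := by
        have e1 : ∀ i : Fin n, (‖w i‖ - a) * ‖w i‖ = ‖w i‖^2 - a * ‖w i‖ := fun i => by ring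
        rw [Finset.sum_congr rfl fun i _ => e1 i, Finset.sum_sub_distrib, ← Finset.mul_sum,
          hper, hβdef]
        ring
      rw [e, sq]
    have T3 : ∑ i, ∑ j, c * (‖w i‖ * ‖w j‖) = 4*c := by
      have e1 : ∀ i : Fin n, ∑ j, c * (‖w i‖ * ‖w j‖) = (c * ‖w i‖) * 2 := by
        intro i
        rw [← hper, Finset.mul_sum]
        exact Finset.sum_congr rfl fun j _ => by ring
      rw [Finset.sum_congr rfl fun i _ => e1 i]
      have : ∑ i : Fin n, c * ‖w i‖ * 2 = 2 * c * ∑ i, ‖w i‖ := by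
        rw [Finset.mul_sum]
        exact Finset.sum_congr rfl fun i _ => by ring
      rw [this, hper]; ring
    have T6 : ∑ i, ∑ j, c * (inner ℝ (w i) (w j) : ℝ) = 0 := by
      have e1 : ∀ i : Fin n, ∑ j, c * (inner ℝ (w i) (w j) : ℝ) = 0 := by
        intro i
        rw [← Finset.mul_sum, hGrow i, mul_zero]
      rw [Finset.sum_congr rfl fun i _ => e1 i, Finset.sum_const, smul_zero]
    -- assemble
    have hsplitsum : ∑ i, ∑ j, ((inner ℝ (w i) (w j) : ℝ)
        - (‖w i‖ - a) * (‖w j‖ - a) + c) * (‖w i‖ * ‖w j‖ - (inner ℝ (w i) (w j) : ℝ))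
        = X - (β - 2*a)^2 + 4*c - P1 + X - 0 := by
      rw [Finset.sum_congr rfl fun i _ => Finset.sum_congr rfl fun j _ => hexp i j]
      simp only [Finset.sum_sub_distrib, Finset.sum_add_distrib]
      rw [T2, T3, T6, ← hXG, ← hXt, ← hP1def]
    rw [hsplitsum] at hnn
    linarith
  -- Step 2 : Cauchy–Schwarz  X² ≤ d · ∑ ⟨wᵢ, W⟩²
  have hXD : X = ∑ i, (‖w i‖ - 2/N) * (inner ℝ (w i) W : ℝ) := by
    have e1 : ∑ i, (‖w i‖ - 2/N) * (inner ℝ (w i) W : ℝ)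
        = ∑ i, ‖w i‖ * (inner ℝ (w i) W : ℝ) - (2/N) * ∑ i, (inner ℝ (w i) W : ℝ) := by
      rw [Finset.mul_sum, ← Finset.sum_sub_distrib]
      exact Finset.sum_congr rfl fun i _ => by ring
    rw [e1, hinnersum W, mul_zero, sub_zero, hX1]
  have hCS2 : X^2 ≤ d * ∑ i, (inner ℝ (w i) W : ℝ)^2 := by
    rw [hXD, hddef]
    exact Finset.sum_mul_sq_le_sq_mul_sq _ _ _
  -- Step 3 : get a unit vector v with X ≤ d * ℓ(v)
  obtain ⟨v, hv1, hXdl⟩ : ∃ v : EuclideanSpace ℝ (Fin 3), ‖v‖ = 1 ∧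
      X ≤ d * ∑ i, (inner ℝ (w i) v : ℝ)^2 := by
    by_cases hW0 : W = 0
    · refine ⟨EuclideanSpace.single (0 : Fin 3) (1:ℝ), ?_, ?_⟩
      · simp [EuclideanSpace.norm_single]
      · have : X = 0 := by rw [hXdef, hW0, inner_zero_left]
        rw [this]
        exact mul_nonneg hd0 (Finset.sum_nonneg fun i _ => sq_nonneg _)
    · have hWn : 0 < ‖W‖ := norm_pos_iff.mpr hW0
      refine ⟨‖W‖⁻¹ • W, ?_, ?_⟩
      · rw [norm_smul, norm_inv, norm_norm, inv_mul_cancel₀ (ne_of_gt hWn)]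
      · have hXpos : 0 < X := by
          rw [hXdef, real_inner_self_eq_norm_sq]
          positivity
        have hWv : ∀ i, (inner ℝ (w i) (‖W‖⁻¹ • W) : ℝ) = ‖W‖⁻¹ * (inner ℝ (w i) W : ℝ) := by
          intro i
          rw [real_inner_smul_right]
        have hXnorm : X = ‖W‖^2 := by rw [hXdef, real_inner_self_eq_norm_sq]
        have e2 : ∑ i, (inner ℝ (w i) (‖W‖⁻¹ • W) : ℝ)^2
            = ‖W‖⁻¹^2 * ∑ i, (inner ℝ (w i) W : ℝ)^2 := by
          rw [Finset.mul_sum]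
          exact Finset.sum_congr rfl fun i _ => by rw [hWv i]; ring
        rw [e2]
        have hinv : ‖W‖⁻¹^2 = X⁻¹ := by
          rw [hXnorm, inv_pow]
        rw [hinv]
        have h9 : d * (X⁻¹ * ∑ i, (inner ℝ (w i) W : ℝ)^2)
            = d * (∑ i, (inner ℝ (w i) W : ℝ)^2) / X := by ring
        rw [h9, le_div_iff₀ hXpos]
        have hxx : X^2 = X * X := sq X
        linarith [hCS2]
  -- Step 4 : dimension-3 inequality and final contradiction
  set ℓ : ℝ := ∑ i, (inner ℝ (w i) v : ℝ)^2 with hℓdef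
  have hℓ0 : 0 ≤ ℓ := Finset.sum_nonneg fun i _ => sq_nonneg _
  have hL4 : ℓ^2 + (β - ℓ)^2/2 ≤ P1 := by
    have := aux_dim3 w v hv1
    rw [← hℓdef, ← hβdef, ← hP1def] at this
    exact this
  -- d = 0
  have hd : d = 0 := by
    by_contra hne
    have hdpos : 0 < d := lt_of_le_of_ne hd0 (Ne.symm hne)
    have hC0 : ℓ^2 + (β - ℓ)^2/2 + (β - 2*a)^2 - 4*c - 2*(d*ℓ) ≤ 0 := by linarith [hI, hL4, hXdl]
    have hkey : 6*(ℓ^2 + (β - ℓ)^2/2 + (β - 2*a)^2 - 4*c - 2*(d*ℓ))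
        = 9*(ℓ - ((d + 4/N) + 2*d)/3)^2 + 48*(1-α)*d/N + 48*(α^2 - 4*α + 8/3)/N^2 := by
      rw [hβd, hadef, hcdef]
      field_simp
      ring
    have hz : α^2 - 4*α + 8/3 = 0 := by rw [hα2]; ring
    rw [hz] at hkey
    have hpos : 0 < 48*(1-α)*d/N := by
      apply div_pos _ hN0
      have : 0 < 1 - α := by linarith
      positivity
    have h00 : (48:ℝ) * 0 / N^2 = 0 := by ring
    linarith [sq_nonneg (ℓ - ((d + 4/N) + 2*d)/3), hC0, hkey, hpos, h00]
  -- conclude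
  intro i
  have hz : ∀ j ∈ Finset.univ, (‖w j‖ - 2/N)^2 = 0 := by
    rw [← Finset.sum_eq_zero_iff_of_nonneg (fun j _ => sq_nonneg _)]
    rw [← hddef]; exact hd
  have := hz i (Finset.mem_univ i)
  have h0 : ‖w i‖ - 2/N = 0 := by
    exact pow_eq_zero_iff (by norm_num) |>.mp this
  rw [hNdef] at h0
  linarith
end

section
/- Let n ≥ 3, α = 2 − 2/√3, and let w₁, …, w_n ∈ ℝ³ satisfy ∑ᵢ wᵢ = 0 and ∑ᵢ |wᵢ| = 2. Define M_{ij} = ⟨wᵢ, wⱼ⟩ − (|wᵢ| − 2α/n)(|wⱼ| − 2α/n) + 2α²/n². If M_{ij} ≥ 0 for all i, j, then 4 divides n and the multiset {w₁, …, w_n} consists of exactly four distinct vectors, each of length 2/n and each occurring exactly n/4 times, with ⟨wᵢ, wⱼ⟩ = −4/(3n²) whenever wᵢ ≠ wⱼ (i.e., their endpoints form the vertices of a regular tetrahedron centered at the origin). -/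
open Finset

private lemma swap3 {ι κ μ : Type*} [Fintype ι] [Fintype κ] [Fintype μ]
    (f : ι → κ → μ → ℝ) :
    ∑ i, ∑ j, ∑ a, f i j a = ∑ a, ∑ i, ∑ j, f i j a := by
  calc ∑ i, ∑ j, ∑ a, f i j a = ∑ i, ∑ a, ∑ j, f i j a :=
        Finset.sum_congr rfl fun i _ => Finset.sum_comm
    _ = ∑ a, ∑ i, ∑ j, f i j a := Finset.sum_comm

private lemma sum_factor {n : ℕ} (w : Fin n → EuclideanSpace ℝ (Fin 3)) (t u : Fin n → ℝ) :
    ∑ i, ∑ j, (t i * u j) * (∑ a, w i a * w j a)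
      = ∑ a : Fin 3, (∑ i, t i * w i a) * (∑ j, u j * w j a) := by
  calc ∑ i, ∑ j, (t i * u j) * (∑ a, w i a * w j a)
      = ∑ i, ∑ j, ∑ a, (t i * w i a) * (u j * w j a) := by
        refine Finset.sum_congr rfl fun i _ => Finset.sum_congr rfl fun j _ => ?_
        rw [Finset.mul_sum]; exact Finset.sum_congr rfl fun a _ => by ring
    _ = ∑ a : Fin 3, ∑ i, ∑ j, (t i * w i a) * (u j * w j a) := swap3 _
    _ = ∑ a : Fin 3, (∑ i, t i * w i a) * (∑ j, u j * w j a) := by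
        exact Finset.sum_congr rfl fun a _ => (Finset.sum_mul_sum _ _ _ _).symm

private lemma sum_factor2 {n : ℕ} (w : Fin n → EuclideanSpace ℝ (Fin 3)) :
    ∑ i, ∑ j, (∑ a, w i a * w j a)^2
      = ∑ a : Fin 3, ∑ b : Fin 3, (∑ i, w i a * w i b)^2 := by
  calc ∑ i, ∑ j, (∑ a, w i a * w j a)^2
      = ∑ i, ∑ j, ∑ a, ∑ b, (w i a * w i b) * (w j a * w j b) := by
        refine Finset.sum_congr rfl fun i _ => Finset.sum_congr rfl fun j _ => ?_
        rw [sq, Finset.sum_mul_sum]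
        exact Finset.sum_congr rfl fun a _ => Finset.sum_congr rfl fun b _ => by ring
    _ = ∑ a : Fin 3, ∑ i, ∑ j, ∑ b, (w i a * w i b) * (w j a * w j b) := swap3 _
    _ = ∑ a : Fin 3, ∑ b : Fin 3, ∑ i, ∑ j, (w i a * w i b) * (w j a * w j b) := by
        exact Finset.sum_congr rfl fun a _ => swap3 _
    _ = ∑ a : Fin 3, ∑ b : Fin 3, (∑ i, w i a * w i b)^2 := by
        refine Finset.sum_congr rfl fun a _ => Finset.sum_congr rfl fun b _ => ?_
        rw [sq, Finset.sum_mul_sum]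

private lemma traceCS (W : Fin 3 → Fin 3 → ℝ) :
    (∑ a, W a a)^2 ≤ 3 * ∑ a, ∑ b, (W a b)^2 := by
  simp only [Fin.sum_univ_three]
  nlinarith [sq_nonneg (W 0 0 - W 1 1), sq_nonneg (W 0 0 - W 2 2), sq_nonneg (W 1 1 - W 2 2),
    sq_nonneg (W 0 1), sq_nonneg (W 0 2), sq_nonneg (W 1 0), sq_nonneg (W 1 2),
    sq_nonneg (W 2 0), sq_nonneg (W 2 1)]

private lemma key3 (W : Fin 3 → Fin 3 → ℝ) (v : Fin 3 → ℝ)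
    (Q A P B : ℝ) (hQ : Q = ∑ a, W a a) (hA : A = ∑ a, (v a)^2)
    (hP : P = ∑ a, ∑ b, (v a * v b) * W a b) (hB : B = ∑ a, ∑ b, (W a b)^2) :
    (P - Q*A/3)^2 ≤ (B - Q^2/3) * ((2/3) * A^2) := by
  have h := Finset.sum_mul_sq_le_sq_mul_sq (univ : Finset (Fin 3 × Fin 3))
    (fun p => W p.1 p.2 - (Q/3) * (if p.1 = p.2 then 1 else 0))
    (fun p => v p.1 * v p.2 - (A/3) * (if p.1 = p.2 then 1 else 0))
  have e1 : (∑ p : Fin 3 × Fin 3, (W p.1 p.2 - (Q/3) * (if p.1 = p.2 then 1 else 0)) *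
      (v p.1 * v p.2 - (A/3) * (if p.1 = p.2 then 1 else 0))) = P - Q*A/3 := by
    rw [hP, hQ, hA, Fintype.sum_prod_type]
    simp only [Fin.sum_univ_three]
    norm_num [Fin.ext_iff]; ring
  have e2 : (∑ p : Fin 3 × Fin 3, (W p.1 p.2 - (Q/3) * (if p.1 = p.2 then 1 else 0))^2)
      = B - Q^2/3 := by
    rw [hB, hQ, Fintype.sum_prod_type]
    simp only [Fin.sum_univ_three]
    norm_num [Fin.ext_iff]; ring
  have e3 : (∑ p : Fin 3 × Fin 3, (v p.1 * v p.2 - (A/3) * (if p.1 = p.2 then 1 else 0))^2)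
      = (2/3) * A^2 := by
    rw [hA, Fintype.sum_prod_type]
    simp only [Fin.sum_univ_three]
    norm_num [Fin.ext_iff]; ring
  rw [e1, e2, e3] at h
  exact h


private lemma endgame (s3 s2 N c x A B P Q V T : ℝ)
    (hs3sq : s3^2 = 3) (hs3pos : 0 < s3) (hN0 : 0 < N)
    (hx2 : x^2 = B - Q^2/3) (hx0 : 0 ≤ x) (hs2sq : s2^2 = 2/3) (hs20 : 0 ≤ s2)
    (hA0 : 0 ≤ A) (hV0 : 0 ≤ V) (hT0 : 0 ≤ T)
    (hT : T = 2*A - B - (Q - 2*c)^2 + 2*c^2)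
    (hQV : Q = V + 4/N)
    (hφ : Q^2/3 + (Q - 2*c)^2 - 2*c^2 = (4/3)*V^2 + (16*(s3-1)/(3*N))*V)
    (hA2VP : A^2 ≤ V*P) (hPA : P ≤ Q/3*A + s2*x*A) : V = 0 := by
  have hs3gt : (3:ℝ)/2 < s3 := by nlinarith
  by_contra hVne
  have hVpos : 0 < V := lt_of_le_of_ne hV0 (Ne.symm hVne)
  have h2A : x^2 + ((4/3)*V^2 + (16*(s3-1)/(3*N))*V) ≤ 2*A := by
    have h1 : B + (Q - 2*c)^2 - 2*c^2 ≤ 2*A := by rw [hT] at hT0; linarith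
    linarith [hx2, hφ]
  have h2A' : x^2 + (4/3)*V^2 + (16/3)*s3*(V/N) - (16/3)*(V/N) ≤ 2*A := by
    have e : (16*(s3-1)/(3*N))*V = (16/3)*s3*(V/N) - (16/3)*(V/N) := by ring
    linarith [h2A, e]
  have hNV : 0 < V/N := by positivity
  have t4 : 24*(V/N) < 16*s3*(V/N) := by nlinarith [hs3gt, hNV]
  rcases eq_or_lt_of_le hA0 with hA00 | hApos
  · linarith [h2A', sq_nonneg x, sq_nonneg V, hA00, hNV, t4]
  · have hAle : A ≤ V*(Q/3) + V*(s2*x) := by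
      have hvp : V*P ≤ V*(Q/3 * A + s2 * x * A) := mul_le_mul_of_nonneg_left hPA hV0
      have e : V*(Q/3 * A + s2 * x * A) = (V*(Q/3) + V*(s2*x))*A := by ring
      have e2 : A^2 = A*A := sq A
      have h3 : A*A ≤ (V*(Q/3) + V*(s2*x))*A := by linarith [hA2VP, hvp, e, e2]
      exact le_of_mul_le_mul_right h3 hApos
    have hAle2 : A ≤ (1/3)*V^2 + (4/3)*(V/N) + V*(s2*x) := by
      have e : V*((V + 4/N)/3) + V*(s2*x) = (1/3)*V^2 + (4/3)*(V/N) + V*(s2*x) := by ring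
      rw [hQV] at hAle
      linarith [hAle, e]
    have hexp : 0 ≤ x^2 - 2*(s2*V)*x + (2/3)*V^2 := by
      have e : x^2 - 2*(s2*V)*x + (2/3)*V^2 = (x - s2*V)^2 := by rw [← hs2sq]; ring
      rw [e]; exact sq_nonneg _
    have e3 : V*(s2*x) = s2*V*x := by ring
    have t3 : 16*s3*(V/N) ≤ 24*(V/N) := by linarith [h2A', hAle2, hexp, e3]
    linarith [t3, t4]

set_option maxHeartbeats 4000000 in
/-- With `n ≥ 3`, `α = 2 - 2/√3`, `w₁, …, wₙ ∈ ℝ³`, `∑ wᵢ = 0`,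
`∑ ‖wᵢ‖ = 2` and `M i j = ⟨wᵢ, wⱼ⟩ - (‖wᵢ‖ - 2α/n)(‖wⱼ‖ - 2α/n) + 2α²/n²`:
if `M` is entrywise nonnegative, then `4 ∣ n` and the multiset `{w₁, …, wₙ}` consists of
exactly four distinct vectors, each of length `2/n`, each occurring exactly `n/4` times,
with `⟨wᵢ, wⱼ⟩ = -4/(3n²)` for distinct vectors (a regular tetrahedron centered at `0`). -/
theorem tetrahedron_of_M_entrywise_nonneg
    (n : ℕ) (hn : 3 ≤ n) (w : Fin n → EuclideanSpace ℝ (Fin 3))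
    (hsum : ∑ i, w i = 0) (hper : ∑ i, ‖w i‖ = 2)
    (hM : ∀ i j : Fin n,
      0 ≤ (inner ℝ (w i) (w j) : ℝ)
        - (‖w i‖ - 2 * (2 - 2 / Real.sqrt 3) / n) * (‖w j‖ - 2 * (2 - 2 / Real.sqrt 3) / n)
        + 2 * (2 - 2 / Real.sqrt 3) ^ 2 / n ^ 2) :
    4 ∣ n ∧
      ∃ S : Finset (EuclideanSpace ℝ (Fin 3)),
        S.card = 4 ∧
        (∀ v ∈ S, ‖v‖ = 2 / n) ∧
        (∀ v ∈ S, ∀ v' ∈ S, v ≠ v' → (inner ℝ v v' : ℝ) = -4 / (3 * n ^ 2)) ∧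
        (∀ i, w i ∈ S) ∧
        (∀ v ∈ S, Nat.card {i : Fin n // w i = v} = n / 4) := by
  classical
  set s3 : ℝ := Real.sqrt 3 with hs3def
  have hs3sq : s3^2 = 3 := Real.sq_sqrt (by norm_num)
  have hs3pos : (0:ℝ) < s3 := Real.sqrt_pos.mpr (by norm_num)
  have hs3gt : (3:ℝ)/2 < s3 := by nlinarith [hs3sq, hs3pos]
  set N : ℝ := (n : ℝ) with hNdef
  have hN3 : (3:ℝ) ≤ N := by rw [hNdef]; exact_mod_cast hn
  have hN0 : (0:ℝ) < N := by linarith only [hN3]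
  set c : ℝ := 2 * (2 - 2 / s3) / N with hcdef
  set ρ : ℝ := 2 / N with hρdef
  -- basic reformulations
  obtain ⟨r, hrdef⟩ : ∃ r : Fin n → ℝ, r = fun i => ‖w i‖ := ⟨_, rfl⟩
  have hri : ∀ i, ‖w i‖ = r i := fun i => by rw [hrdef]
  obtain ⟨X, hXdef⟩ : ∃ X : Fin n → Fin n → ℝ, X = fun i j => (inner ℝ (w i) (w j) : ℝ) := ⟨_, rfl⟩
  have hXi : ∀ i j, (inner ℝ (w i) (w j) : ℝ) = X i j := fun i j => by rw [hXdef]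
  simp only [hri] at hper
  simp only [hri, hXi] at hM
  have h2s3 : 2 / s3 = 2 * s3 / 3 := by
    rw [div_eq_div_iff (ne_of_gt hs3pos) (by norm_num)]
    linear_combination -2 * hs3sq
  have hc2 : c = (4 - 4 * s3 / 3) / N := by
    rw [hcdef, h2s3]; ring
  have hMf : ∀ i j, 0 ≤ X i j - (r i - c) * (r j - c) + c^2/2 := by
    intro i j
    have h := hM i j
    have e : 2 * (2 - 2/s3)^2 / N^2 = c^2/2 := by
      rw [hcdef]; field_simp
    rw [e] at h
    exact h
  have hw0 : ∀ a, ∑ i, w i a = 0 := by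
    intro a
    have h := congrArg (fun v : EuclideanSpace ℝ (Fin 3) => v a) hsum
    simpa using h
  have hXc : ∀ i j, X i j = ∑ a, w i a * w j a := by
    intro i j
    rw [← hXi, PiLp.inner_apply]
    simp [RCLike.inner_apply, mul_comm]
  have hr2 : ∀ i, r i ^ 2 = X i i := by
    intro i
    rw [← hXi, ← hri]
    exact (real_inner_self_eq_norm_sq (w i)).symm
  have hrnn : ∀ i, 0 ≤ r i := fun i => by rw [← hri]; exact norm_nonneg _
  have hCS : ∀ i j, X i j ≤ r i * r j := by
    intro i j
    rw [← hXi, ← hri, ← hri]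
    exact real_inner_le_norm (w i) (w j)
  -- scalar quantities
  obtain ⟨pv, hpvdef⟩ : ∃ pv : Fin 3 → ℝ, pv = fun a => ∑ i, r i * w i a := ⟨_, rfl⟩
  have hpv : ∀ a, pv a = ∑ i, r i * w i a := fun a => by rw [hpvdef]
  obtain ⟨qv, hqvdef⟩ : ∃ qv : Fin n → ℝ, qv = fun i => ∑ a, w i a * pv a := ⟨_, rfl⟩
  have hqv : ∀ i, qv i = ∑ a, w i a * pv a := fun i => by rw [hqvdef]
  obtain ⟨Wm, hWmdef⟩ : ∃ Wm : Fin 3 → Fin 3 → ℝ, Wm = fun a b => ∑ i, w i a * w i b := ⟨_, rfl⟩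
  have hWm : ∀ a b, Wm a b = ∑ i, w i a * w i b := fun a b => by rw [hWmdef]
  set A : ℝ := ∑ a, (pv a)^2 with hAdef
  set P : ℝ := ∑ i, (qv i)^2 with hPdef
  set Q : ℝ := ∑ i, (r i)^2 with hQdef
  set B : ℝ := ∑ i, ∑ j, (X i j)^2 with hBdef
  set V : ℝ := ∑ i, (r i - ρ)^2 with hVdef
  set T : ℝ := ∑ i, ∑ j, (X i j - (r i - c) * (r j - c) + c^2/2) * (r i * r j - X i j) with hTdef
  have hA0 : 0 ≤ A := Finset.sum_nonneg fun a _ => sq_nonneg _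
  have hP0 : 0 ≤ P := Finset.sum_nonneg fun i _ => sq_nonneg _
  have hV0 : 0 ≤ V := Finset.sum_nonneg fun i _ => sq_nonneg _
  have hT0 : 0 ≤ T := Finset.sum_nonneg fun i _ => Finset.sum_nonneg fun j _ =>
    mul_nonneg (hMf i j) (by linarith only [hCS i j])

  have hsumr : ∑ i, r i = 2 := hper
  have hQV : Q = V + 4/N := by
    have hVQ : V = Q - 4/N := by
      rw [hVdef, hQdef]
      rw [Finset.sum_congr rfl fun i (_ : i ∈ univ) =>
        (by ring : (r i - ρ)^2 = ((r i)^2 - (2*ρ) * (r i)) + ρ^2)]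
      rw [Finset.sum_add_distrib, Finset.sum_sub_distrib, Finset.sum_const, ← Finset.mul_sum,
        hsumr]
      simp only [card_univ, Fintype.card_fin, nsmul_eq_mul]
      rw [hρdef]
      field_simp
      ring
    linarith only [hVQ]
  have hS1 : ∑ i, ∑ j, (r i * r j) * X i j = A := by
    calc ∑ i, ∑ j, (r i * r j) * X i j
        = ∑ a : Fin 3, (∑ i, r i * w i a) * (∑ j, r j * w j a) := by
          simp only [hXc]; exact sum_factor w r r
      _ = A := by
          rw [hAdef]
          refine Finset.sum_congr rfl fun a _ => ?_
          rw [hpv, sq]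
  have hpvc : ∀ a, ∑ i, (r i - c) * w i a = pv a := by
    intro a
    rw [hpv]
    rw [Finset.sum_congr rfl fun i (_ : i ∈ univ) =>
      (by ring : (r i - c) * w i a = r i * w i a - c * w i a)]
    rw [Finset.sum_sub_distrib, ← Finset.mul_sum, hw0, mul_zero, sub_zero]
  have hS4 : ∑ i, ∑ j, ((r i - c) * (r j - c)) * X i j = A := by
    have h := sum_factor w (fun i => r i - c) (fun i => r i - c)
    simp only [] at h
    calc ∑ i, ∑ j, ((r i - c) * (r j - c)) * X i j
        = ∑ a : Fin 3, (∑ i, (r i - c) * w i a) * (∑ j, (r j - c) * w j a) := by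
          simp only [hXc]; exact h
      _ = A := by
          rw [hAdef]
          refine Finset.sum_congr rfl fun a _ => ?_
          rw [hpvc, sq]
  have hS6 : ∑ i, ∑ j, X i j = 0 := by
    have h := sum_factor w (fun _ => 1) (fun _ => 1)
    simp only [one_mul] at h
    simp only [hXc]
    rw [h]
    refine Finset.sum_eq_zero fun a _ => ?_
    simp [hw0]
  have hS3 : ∑ i, ∑ j, (((r i - c) * r i) * ((r j - c) * r j)) = (Q - 2*c)^2 := by
    rw [← Finset.sum_mul_sum]
    have e : ∑ i, (r i - c) * r i = Q - 2*c := by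
      rw [hQdef]
      rw [Finset.sum_congr rfl fun i (_ : i ∈ univ) =>
        (by ring : (r i - c) * r i = (r i)^2 - c * (r i))]
      rw [Finset.sum_sub_distrib, ← Finset.mul_sum, hsumr]
      ring
    rw [e, sq]
  have hS5 : ∑ i, ∑ j, ((c^2/2) * r i) * r j = 2*c^2 := by
    rw [← Finset.sum_mul_sum, ← Finset.mul_sum, hsumr]
    ring
  have hS6' : ∑ i, ∑ j, (c^2/2) * X i j = 0 := by
    simp only [← Finset.mul_sum]
    rw [hS6, mul_zero]
  have hT : T = 2*A - B - (Q - 2*c)^2 + 2*c^2 := by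
    rw [hTdef]
    rw [Finset.sum_congr rfl fun i (_ : i ∈ univ) => Finset.sum_congr rfl fun j (_ : j ∈ univ) =>
      (by ring : (X i j - (r i - c) * (r j - c) + c^2/2) * (r i * r j - X i j)
        = ((((r i * r j) * X i j - (X i j)^2 - (((r i - c) * r i) * ((r j - c) * r j)))
          + ((r i - c) * (r j - c)) * X i j) + ((c^2/2) * r i) * r j) - (c^2/2) * X i j)]
    simp only [Finset.sum_add_distrib, Finset.sum_sub_distrib]
    rw [hS1, hS4, hS3, hS5, hS6', ← hBdef]
    ring
  have hQW : Q = ∑ a, Wm a a := by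
    rw [hQdef]
    calc ∑ i, (r i)^2 = ∑ i, ∑ a, w i a * w i a :=
          Finset.sum_congr rfl fun i _ => by rw [hr2, hXc]
      _ = ∑ a, ∑ i, w i a * w i a := Finset.sum_comm
      _ = ∑ a, Wm a a := Finset.sum_congr rfl fun a _ => (hWm a a).symm
  have hB2 : B = ∑ a, ∑ b, (Wm a b)^2 := by
    rw [hBdef]
    calc ∑ i, ∑ j, (X i j)^2 = ∑ i, ∑ j, (∑ a, w i a * w j a)^2 := by simp only [hXc]
      _ = ∑ a, ∑ b, (∑ i, w i a * w i b)^2 := sum_factor2 w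
      _ = ∑ a, ∑ b, (Wm a b)^2 := by simp only [hWm]
  have hPW : P = ∑ a, ∑ b, (pv a * pv b) * Wm a b := by
    rw [hPdef]
    calc ∑ i, (qv i)^2 = ∑ i, ∑ a, ∑ b, (w i a * pv a) * (w i b * pv b) := by
          refine Finset.sum_congr rfl fun i _ => ?_
          rw [hqv, sq, Finset.sum_mul_sum]
      _ = ∑ a, ∑ i, ∑ b, (w i a * pv a) * (w i b * pv b) := Finset.sum_comm
      _ = ∑ a, ∑ b, ∑ i, (w i a * pv a) * (w i b * pv b) :=
          Finset.sum_congr rfl fun a _ => Finset.sum_comm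
      _ = ∑ a, ∑ b, (pv a * pv b) * ∑ i, w i a * w i b := by
          refine Finset.sum_congr rfl fun a _ => Finset.sum_congr rfl fun b _ => ?_
          rw [Finset.mul_sum]
          exact Finset.sum_congr rfl fun i _ => by ring
      _ = ∑ a, ∑ b, (pv a * pv b) * Wm a b := by simp only [hWm]
  have hq0 : ∑ i, qv i = 0 := by
    calc ∑ i, qv i = ∑ i, ∑ a, w i a * pv a := by simp only [hqv]
      _ = ∑ a, ∑ i, w i a * pv a := Finset.sum_comm
      _ = ∑ a, (∑ i, w i a) * pv a :=
          Finset.sum_congr rfl fun a _ => (Finset.sum_mul _ _ _).symm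
      _ = 0 := by simp [hw0]
  have hAq : A = ∑ i, r i * qv i := by
    rw [hAdef]
    calc ∑ a, (pv a)^2 = ∑ a, ∑ i, (r i * w i a) * pv a := by
          refine Finset.sum_congr rfl fun a _ => ?_
          rw [sq]
          nth_rewrite 1 [hpv]
          rw [Finset.sum_mul]
      _ = ∑ i, ∑ a, (r i * w i a) * pv a := Finset.sum_comm
      _ = ∑ i, r i * qv i := by
          refine Finset.sum_congr rfl fun i _ => ?_
          rw [hqv, Finset.mul_sum]
          exact Finset.sum_congr rfl fun a _ => by ring
  have hA2VP : A^2 ≤ V * P := by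
    have e : A = ∑ i, (r i - ρ) * qv i := by
      have e2 : ∑ i, (r i - ρ) * qv i = ∑ i, r i * qv i - ρ * ∑ i, qv i := by
        rw [Finset.mul_sum, ← Finset.sum_sub_distrib]
        exact Finset.sum_congr rfl fun i _ => by ring
      rw [hAq, e2, hq0, mul_zero, sub_zero]
    have h := Finset.sum_mul_sq_le_sq_mul_sq univ (fun i => r i - ρ) qv
    rw [← e, ← hVdef, ← hPdef] at h
    exact h
  set x : ℝ := Real.sqrt (B - Q^2/3) with hxdef
  have hBQ : Q^2/3 ≤ B := by
    have h := traceCS Wm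
    rw [← hQW] at h
    rw [← hB2] at h
    linarith only [h]
  have hx2 : x^2 = B - Q^2/3 := Real.sq_sqrt (by linarith only [hBQ])
  have hx0 : 0 ≤ x := Real.sqrt_nonneg _
  set s2 : ℝ := Real.sqrt (2/3) with hs2def
  have hs2sq : s2^2 = 2/3 := Real.sq_sqrt (by norm_num)
  have hs20 : 0 ≤ s2 := Real.sqrt_nonneg _
  have hPA : P ≤ Q/3 * A + s2 * x * A := by
    have hk := key3 Wm pv Q A P B hQW hAdef hPW hB2
    have e : (B - Q^2/3) * ((2/3) * A^2) = (s2*x*A)^2 := by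
      rw [← hx2, ← hs2sq]; ring
    rw [e] at hk
    have := le_of_sq_le_sq hk (mul_nonneg (mul_nonneg hs20 hx0) hA0)
    linarith only [this]
  have hφ : Q^2/3 + (Q - 2*c)^2 - 2*c^2 = (4/3)*V^2 + (16*(s3-1)/(3*N))*V := by
    rw [hQV, hc2]
    linear_combination (32/(9*N^2)) * hs3sq

  -- main rigidity: V = 0
  have hVz : V = 0 := by
    refine endgame s3 s2 N c x A B P Q V T hs3sq hs3pos hN0 hx2 hx0 hs2sq hs20 hA0 hV0 hT0 hT hQV hφ hA2VP hPA
  -- consequences of V = 0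
  have hrρ : ∀ i, r i = ρ := by
    intro i
    have hsum0 : ∑ j, (r j - ρ)^2 = 0 := by rw [← hVdef]; exact hVz
    have h := (Finset.sum_eq_zero_iff_of_nonneg
      (fun j (_ : j ∈ univ) => sq_nonneg (r j - ρ))).mp hsum0 i (mem_univ i)
    have h2 := (pow_eq_zero_iff two_ne_zero).mp h
    linarith only [sub_eq_zero.mp h2]
  have hAz : A = 0 := by
    have h := hA2VP
    rw [hVz, zero_mul] at h
    have h2 := le_antisymm h (sq_nonneg A)
    exact (pow_eq_zero_iff two_ne_zero).mp h2
  have hφ0 : Q^2/3 + (Q - 2*c)^2 - 2*c^2 = 0 := by rw [hφ, hVz]; ring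
  have hTz : T = 0 := by
    have e : T = -(x^2) := by linear_combination hT + hx2 - hφ0 + 2*hAz
    have h1 : T ≤ 0 := by rw [e]; exact neg_nonpos.mpr (sq_nonneg x)
    exact le_antisymm h1 hT0
  have hpair : ∀ i j, (X i j - (r i - c) * (r j - c) + c^2/2) * (r i * r j - X i j) = 0 := by
    have h0 : ∑ i, ∑ j, (X i j - (r i - c) * (r j - c) + c^2/2) * (r i * r j - X i j) = 0 := by
      rw [← hTdef]; exact hTz
    intro i j
    have h1 := (Finset.sum_eq_zero_iff_of_nonneg (fun i (_ : i ∈ univ) =>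
      Finset.sum_nonneg fun j _ => mul_nonneg (hMf i j) (by linarith only [hCS i j]))).mp h0 i
      (mem_univ i)
    exact (Finset.sum_eq_zero_iff_of_nonneg (fun j (_ : j ∈ univ) =>
      mul_nonneg (hMf i j) (by linarith only [hCS i j]))).mp h1 j (mem_univ j)
  have hXii : ∀ i, X i i = ρ^2 := fun i => by rw [← hr2, hrρ i]
  have hXd : ∀ i j, w i ≠ w j → X i j = -4/(3*N^2) := by
    intro i j hne
    rcases mul_eq_zero.mp (hpair i j) with h | h
    · have hx : X i j = (ρ - c)^2 - c^2/2 := by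
        rw [hrρ i, hrρ j] at h; linarith only [h]
      rw [hx, hρdef, hc2]
      linear_combination (8/(9*N^2)) * hs3sq
    · exfalso
      apply hne
      have hxij : X i j = ρ^2 := by
        rw [hrρ i, hrρ j] at h
        linear_combination -h
      have hd : (inner ℝ (w i - w j) (w i - w j) : ℝ) = 0 := by
        rw [inner_sub_left, inner_sub_right, inner_sub_right]
        have hji : (inner ℝ (w j) (w i) : ℝ) = X i j := by
          rw [real_inner_comm (w i) (w j)]
          exact hXi i j
        rw [hXi i i, hXi i j, hji, hXi j j]
        linear_combination hXii i + hXii j - 2*hxij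
      have h0 := inner_self_eq_zero.mp hd
      exact sub_eq_zero.mp h0
  have hXrow : ∀ i, ∑ j, X i j = 0 := by
    intro i
    simp only [hXc]
    rw [Finset.sum_comm]
    refine Finset.sum_eq_zero fun a _ => ?_
    rw [← Finset.mul_sum, hw0, mul_zero]
  have hkey : ∀ i, 4 * ((univ.filter fun j => w j = w i).card) = n := by
    intro i
    have hmle : (univ.filter fun j => w j = w i).card ≤ n := by
      refine le_trans (Finset.card_filter_le _ _) ?_
      simp
    have h1 : ∑ j ∈ univ.filter (fun j => w j = w i), X i j
        = ((univ.filter fun j => w j = w i).card : ℝ) * ρ^2 := by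
      rw [Finset.sum_congr rfl (fun j hj => ?_), Finset.sum_const, nsmul_eq_mul]
      have hwj : w j = w i := (Finset.mem_filter.mp hj).2
      rw [← hXi, hwj, hXi, hXii i]
    have h2 : ∑ j ∈ univ.filter (fun j => ¬ w j = w i), X i j
        = ((univ.filter fun j => ¬ w j = w i).card : ℝ) * (-4/(3*N^2)) := by
      rw [Finset.sum_congr rfl (fun j hj => ?_), Finset.sum_const, nsmul_eq_mul]
      have hwj : ¬ w j = w i := (Finset.mem_filter.mp hj).2
      exact hXd i j (fun hh => hwj hh.symm)
    have hcards : (univ.filter fun j => w j = w i).card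
        + (univ.filter fun j => ¬ w j = w i).card = n := by
      rw [Finset.card_filter_add_card_filter_not]
      simp
    have hsplit := Finset.sum_filter_add_sum_filter_not univ (fun j => w j = w i)
      (fun j => X i j)
    have heq : ((univ.filter fun j => w j = w i).card : ℝ) * ρ^2
        + ((univ.filter fun j => ¬ w j = w i).card : ℝ) * (-4/(3*N^2)) = 0 := by
      rw [← h1, ← h2, hsplit]
      exact hXrow i
    have hc2' : ((univ.filter fun j => ¬ w j = w i).card : ℝ)
        = N - ((univ.filter fun j => w j = w i).card : ℝ) := by
      rw [hNdef]
      have := hcards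
      push_cast [← this]
      ring
    rw [hc2', hρdef] at heq
    have h4m : (4:ℝ) * ((univ.filter fun j => w j = w i).card : ℝ) = N := by
      field_simp [ne_of_gt hN0] at heq
      have e : ((16:ℝ)*((univ.filter fun j => w j = w i).card : ℝ) - 4*N)*N^2 = 0 := by
        linear_combination N^2 * heq
      rcases mul_eq_zero.mp e with h' | h'
      · linarith only [h']
      · exfalso
        have hN2 : (0:ℝ) < N^2 := by positivity
        linarith only [h', hN2]
    have hcast : ((4 * (univ.filter fun j => w j = w i).card : ℕ) : ℝ) = (n : ℝ) := by
      push_cast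
      rw [← hNdef]
      linarith only [h4m]
    exact_mod_cast hcast
  have hdvd : 4 ∣ n := ⟨_, (hkey ⟨0, by omega⟩).symm⟩
  have hfib : ∀ v ∈ univ.image w, (univ.filter fun i => w i = v).card = n/4 := by
    intro v hv
    obtain ⟨i, _, rfl⟩ := Finset.mem_image.mp hv
    have := hkey i
    omega
  refine ⟨hdvd, univ.image w, ?_, ?_, ?_, ?_, ?_⟩
  · -- card = 4
    have hcardsum : (univ : Finset (Fin n)).card
        = ∑ b ∈ univ.image w, (univ.filter fun i => w i = b).card :=
      Finset.card_eq_sum_card_fiberwise (fun x _ => Finset.mem_image_of_mem w (mem_univ x))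
    rw [Finset.sum_congr rfl hfib, Finset.sum_const, smul_eq_mul, card_univ,
      Fintype.card_fin] at hcardsum
    have hq4 : 4 * (n/4) = n := Nat.mul_div_cancel' hdvd
    have hpos : 0 < n/4 := by omega
    exact Nat.eq_of_mul_eq_mul_right hpos (by omega)
  · -- norms
    intro v hv
    obtain ⟨i, _, rfl⟩ := Finset.mem_image.mp hv
    rw [hri, hrρ i, hρdef]
  · -- inner products
    intro v hv v' hv' hne
    obtain ⟨i, _, rfl⟩ := Finset.mem_image.mp hv
    obtain ⟨j, _, rfl⟩ := Finset.mem_image.mp hv'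
    rw [hXi]
    exact hXd i j hne
  · -- membership
    intro i
    exact Finset.mem_image_of_mem w (mem_univ i)
  · -- counts
    intro v hv
    rw [Nat.card_eq_fintype_card, Fintype.card_subtype]
    exact hfib v hv
end

section
/- Let n ≥ 4 with 4 | n, α = 2 − 2/√3, and suppose the multiset {w₁, …, w_n} ⊂ ℝ³ consists of four distinct vectors, each of length 2/n and each occurring exactly n/4 times, with pairwise inner products ⟨wᵢ, wⱼ⟩ = −4/(3n²) for distinct vectors (endpoints forming a regular tetrahedron centered at the origin). Then ∑ᵢ wᵢ = 0, ∑ᵢ |wᵢ| = 2, and max over i ≠ j of (|wᵢ| + |wⱼ| − |wᵢ + wⱼ|) equals 2α/n. -/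
/-- Let `n ≥ 4` with `4 ∣ n`, `α = 2 - 2/√3`, and suppose the multiset
`{w₁, …, wₙ} ⊂ ℝ³` consists of four distinct vectors, each of length `2/n`, each occurring
exactly `n/4` times, with pairwise inner products `-4/(3n²)` (a regular tetrahedron centered
at the origin). Then `∑ wᵢ = 0`, `∑ ‖wᵢ‖ = 2`, and
`max_{i ≠ j} (‖wᵢ‖ + ‖wⱼ‖ - ‖wᵢ + wⱼ‖) = 2α/n`. -/
theorem tetrahedron_attains_bound
    (n : ℕ) (hn : 4 ≤ n) (hdvd : 4 ∣ n)
    (w : Fin n → EuclideanSpace ℝ (Fin 3))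
    (S : Finset (EuclideanSpace ℝ (Fin 3))) (hScard : S.card = 4)
    (hnorm : ∀ v ∈ S, ‖v‖ = 2 / n)
    (hinner : ∀ v ∈ S, ∀ v' ∈ S, v ≠ v' → (inner ℝ v v' : ℝ) = -4 / (3 * n ^ 2))
    (hmem : ∀ i, w i ∈ S)
    (hfiber : ∀ v ∈ S, Nat.card {i : Fin n // w i = v} = n / 4) :
    (∑ i, w i = 0) ∧ (∑ i, ‖w i‖ = 2) ∧
      IsGreatest {x : ℝ | ∃ i j : Fin n, i ≠ j ∧ x = ‖w i‖ + ‖w j‖ - ‖w i + w j‖}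
        (2 * (2 - 2 / Real.sqrt 3) / n) := by
  classical
  have hNpos : (0:ℝ) < (n:ℝ) := by
    have : 0 < n := by omega
    exact_mod_cast this
  have hNn : (n:ℝ) ≠ 0 := ne_of_gt hNpos
  have hs3 : (0:ℝ) < Real.sqrt 3 := Real.sqrt_pos.mpr (by norm_num)
  have hsq : Real.sqrt 3 ^ 2 = 3 := Real.sq_sqrt (by norm_num)
  have hs1 : (1:ℝ) < Real.sqrt 3 := by nlinarith
  -- the key value computation for distinct vectors
  have key : ∀ a ∈ S, ∀ b ∈ S, a ≠ b →
      ‖a‖ + ‖b‖ - ‖a + b‖ = 2 * (2 - 2 / Real.sqrt 3) / n := by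
    intro a ha b hb hab
    have hab2 : ‖a + b‖ ^ 2 = 16 / (3 * (n:ℝ) ^ 2) := by
      rw [norm_add_sq_real, hnorm a ha, hnorm b hb, hinner a ha b hb hab]
      field_simp
      ring
    have h1 : (4 / (Real.sqrt 3 * (n:ℝ))) ^ 2 = 16 / (3 * (n:ℝ) ^ 2) := by
      rw [div_pow, mul_pow, hsq]
      norm_num
    have hnab : ‖a + b‖ = 4 / (Real.sqrt 3 * (n:ℝ)) := by
      calc ‖a + b‖ = Real.sqrt (‖a + b‖ ^ 2) := (Real.sqrt_sq (norm_nonneg _)).symm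
        _ = Real.sqrt ((4 / (Real.sqrt 3 * (n:ℝ))) ^ 2) := by rw [hab2, h1]
        _ = 4 / (Real.sqrt 3 * (n:ℝ)) := Real.sqrt_sq (by positivity)
    rw [hnorm a ha, hnorm b hb, hnab]
    field_simp
    ring
  -- the sum over S is zero
  have hS0 : ∑ v ∈ S, v = 0 := by
    have h : (inner ℝ (∑ v ∈ S, v) (∑ v ∈ S, v) : ℝ) = 0 := by
      rw [sum_inner]
      have keyv : ∀ v ∈ S, (inner ℝ v (∑ v' ∈ S, v') : ℝ) = 0 := by
        intro v hv
        rw [inner_sum, ← Finset.add_sum_erase _ _ hv]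
        have h1 : (inner ℝ v v : ℝ) = (2 / (n:ℝ)) ^ 2 := by
          rw [real_inner_self_eq_norm_sq, hnorm v hv]
        have h2 : ∑ v' ∈ S.erase v, (inner ℝ v v' : ℝ) = 3 * (-4 / (3 * (n:ℝ) ^ 2)) := by
          rw [Finset.sum_congr rfl (fun v' hv' =>
            hinner v hv v' (Finset.mem_of_mem_erase hv')
              (Finset.ne_of_mem_erase hv').symm)]
          rw [Finset.sum_const, Finset.card_erase_of_mem hv, hScard, nsmul_eq_mul]
          norm_num
        rw [h1, h2]
        field_simp
        ring
      rw [Finset.sum_congr rfl keyv, Finset.sum_const_zero]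
    exact inner_self_eq_zero.mp h
  -- the fibers partition the sum
  have hfilter : ∀ v ∈ S, (Finset.univ.filter (fun i => w i = v)).card = n / 4 := by
    intro v hv
    have := hfiber v hv
    rwa [Nat.card_eq_fintype_card, Fintype.card_subtype] at this
  have hw0 : ∑ i, w i = 0 := by
    rw [← Finset.sum_fiberwise_of_maps_to (fun i _ => hmem i) w]
    have hfib : ∀ v ∈ S, ∑ i ∈ Finset.univ.filter (fun i => w i = v), w i = (n / 4 : ℕ) • v := by
      intro v hv
      rw [Finset.sum_congr rfl (fun i hi => (Finset.mem_filter.mp hi).2),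
        Finset.sum_const, hfilter v hv]
    rw [Finset.sum_congr rfl hfib, ← Finset.smul_sum, hS0, smul_zero]
  have hw2 : ∑ i, ‖w i‖ = 2 := by
    rw [Finset.sum_congr rfl (fun i _ => hnorm _ (hmem i)), Finset.sum_const,
      Finset.card_univ, Fintype.card_fin, nsmul_eq_mul]
    field_simp
  refine ⟨hw0, hw2, ?_, ?_⟩
  · -- membership: attained
    obtain ⟨a, ha, b, hb, hab⟩ := Finset.one_lt_card.mp (by omega : 1 < S.card)
    have hfa : 0 < Nat.card {i : Fin n // w i = a} := by rw [hfiber a ha]; omega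
    have hfb : 0 < Nat.card {i : Fin n // w i = b} := by rw [hfiber b hb]; omega
    obtain ⟨⟨i, hi⟩⟩ := (Nat.card_pos_iff.mp hfa).1
    obtain ⟨⟨j, hj⟩⟩ := (Nat.card_pos_iff.mp hfb).1
    refine ⟨i, j, fun h => hab (by rw [← hi, ← hj, h]), ?_⟩
    rw [hi, hj]
    exact (key a ha b hb hab).symm
  · -- upper bound
    rintro x ⟨i, j, hij, rfl⟩
    by_cases h : w i = w j
    · have : w i + w j = (2:ℝ) • w j := by rw [h, two_smul]
      rw [this, norm_smul, h]
      simp only [Real.norm_ofNat]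
      have hα : (0:ℝ) < 2 - 2 / Real.sqrt 3 := by
        have : 2 / Real.sqrt 3 < 2 := by
          rw [div_lt_iff₀ hs3]; nlinarith
        linarith
      have : (0:ℝ) ≤ 2 * (2 - 2 / Real.sqrt 3) / n := by positivity
      linarith
    · exact le_of_eq (key _ (hmem i) _ (hmem j) h)
end
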